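/- arXiv:2205.08080 — 4 statements merged into one kernel-verified Lean document; each statement's English description precedes it below -/
import Mathlib

section
/- Let R be a commutative ring and let α, β, α', β' ∈ R. Then in the formal power series ring R[[X]] one has the identity (∑_{n≥0} h_n(α,β)·h_n(α',β')·X^n) · (1 − αα'X) · (1 − αβ'X) · (1 − βα'X) · (1 − ββ'X) = 1 − αβα'β'·X². -/
/-!
By the geometric-sum formula `h_n(a,b) (a - b) = a^(n+1) - b^(n+1)`, multiplying the series
`∑ h_n(a,b) h_n(a',b') X^n` by `(a - b)(a' - b')` splits it into four geometric series in
`aa', ab', ba', bb'`, each inverse to one of the four linear factors. After this, the identity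
times `(a - b)(a' - b')` is a polynomial identity. In the generic ring `ℤ[a, b, a', b']` that
factor can be cancelled, and the identity over any `R` is a specialisation of the generic one.
-/

open PowerSeries

def hSym {R : Type*} [CommRing R] (n : ℕ) (α β : R) : R :=
  ∑ i ∈ Finset.range (n + 1), α ^ i * β ^ (n - i)

theorem PowerSeries.map_mk {R S : Type*} [Semiring R] [Semiring S] (φ : R →+* S) (f : ℕ → R) :
    map φ (mk f) = mk (φ ∘ f) := by
  ext n
  simp [coeff_map]

section

variable {R : Type*} [CommRing R]

theorem hSym_mul_sub (n : ℕ) (a b : R) : hSym n a b * (a - b) = a ^ (n + 1) - b ^ (n + 1) := by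
  simpa [hSym] using geom_sum₂_mul a b (n + 1)

theorem map_hSym {S : Type*} [CommRing S] (φ : R →+* S) (n : ℕ) (a b : R) :
    φ (hSym n a b) = hSym n (φ a) (φ b) := by
  simp [hSym]

theorem mk_pow_mul_one_sub_C_mul_X (c : R) : mk (c ^ ·) * (1 - C c * X) = 1 := by
  simpa [rescale_mk, rescale_X] using congrArg (rescale c) (mk_one_mul_one_sub_eq_one R)

theorem C_mul_mk_hSym_mul_hSym (a b a' b' : R) :
    C ((a - b) * (a' - b')) * mk (fun n => hSym n a b * hSym n a' b') =
      C (a * a') * mk ((a * a') ^ ·) - C (a * b') * mk ((a * b') ^ ·)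
        - C (b * a') * mk ((b * a') ^ ·) + C (b * b') * mk ((b * b') ^ ·) := by
  ext n
  simp only [map_add, map_sub, coeff_C_mul, coeff_mk]
  linear_combination (hSym n a' b' * (a' - b')) * hSym_mul_sub n a b +
    (a ^ (n + 1) - b ^ (n + 1)) * hSym_mul_sub n a' b'

theorem euler_factors_partial_fractions (a b a' b' : R) :
    C (a * a') * ((1 - C (a * b') * X) * (1 - C (b * a') * X) * (1 - C (b * b') * X))
      - C (a * b') * ((1 - C (a * a') * X) * (1 - C (b * a') * X) * (1 - C (b * b') * X))
      - C (b * a') * ((1 - C (a * a') * X) * (1 - C (a * b') * X) * (1 - C (b * b') * X))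
      + C (b * b') * ((1 - C (a * a') * X) * (1 - C (a * b') * X) * (1 - C (b * a') * X)) =
      C ((a - b) * (a' - b')) * (1 - C (a * b * a' * b') * X ^ 2) := by
  simp only [map_mul, map_sub]
  ring

theorem C_mul_euler_identity (a b a' b' : R) :
    C ((a - b) * (a' - b')) * (mk (fun n => hSym n a b * hSym n a' b') *
        (1 - C (a * a') * X) * (1 - C (a * b') * X) * (1 - C (b * a') * X) *
        (1 - C (b * b') * X)) =
      C ((a - b) * (a' - b')) * (1 - C (a * b * a' * b') * X ^ 2) := by
  set F₁ := 1 - C (a * a') * X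
  set F₂ := 1 - C (a * b') * X
  set F₃ := 1 - C (b * a') * X
  set F₄ := 1 - C (b * b') * X
  linear_combination F₁ * F₂ * F₃ * F₄ * C_mul_mk_hSym_mul_hSym a b a' b'
    + C (a * a') * F₂ * F₃ * F₄ * mk_pow_mul_one_sub_C_mul_X (a * a')
    - C (a * b') * F₁ * F₃ * F₄ * mk_pow_mul_one_sub_C_mul_X (a * b')
    - C (b * a') * F₁ * F₂ * F₄ * mk_pow_mul_one_sub_C_mul_X (b * a')
    + C (b * b') * F₁ * F₂ * F₃ * mk_pow_mul_one_sub_C_mul_X (b * b')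
    + euler_factors_partial_fractions a b a' b'

theorem euler_identity_of_ne [IsDomain R] {a b a' b' : R} (h : a ≠ b) (h' : a' ≠ b') :
    mk (fun n => hSym n a b * hSym n a' b') *
        (1 - C (a * a') * X) * (1 - C (a * b') * X) * (1 - C (b * a') * X) *
        (1 - C (b * b') * X) =
      1 - C (a * b * a' * b') * X ^ 2 :=
  mul_left_cancel₀
    ((map_ne_zero_iff _ C_injective).2 (mul_ne_zero (sub_ne_zero.2 h) (sub_ne_zero.2 h')))
    (C_mul_euler_identity a b a' b')

end

/-- The local Rankin–Selberg Euler factor identity in `R[[X]]`: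
`(∑ h_n(α,β)h_n(α',β') X^n)(1-αα'X)(1-αβ'X)(1-βα'X)(1-ββ'X) = 1 - αβα'β'X²`. -/
theorem stmt_0 {R : Type*} [CommRing R] (α β α' β' : R) :
    (PowerSeries.mk fun n => hSym n α β * hSym n α' β') *
        (1 - PowerSeries.C (α * α') * PowerSeries.X) *
        (1 - PowerSeries.C (α * β') * PowerSeries.X) *
        (1 - PowerSeries.C (β * α') * PowerSeries.X) *
        (1 - PowerSeries.C (β * β') * PowerSeries.X) =
      1 - PowerSeries.C (α * β * α' * β') * PowerSeries.X ^ 2 := by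
  have generic := euler_identity_of_ne (R := MvPolynomial (Fin 4) ℤ)
    (MvPolynomial.X_injective.ne (by decide : (0 : Fin 4) ≠ 1))
    (MvPolynomial.X_injective.ne (by decide : (2 : Fin 4) ≠ 3))
  let φ := MvPolynomial.eval₂Hom (Int.castRingHom R) ![α, β, α', β']
  have specialised := congrArg (map φ) generic
  simp only [map_mul, map_sub, map_one, map_pow, map_mk, Function.comp_def, map_hSym, map_C,
    map_X] at specialised
  simpa [φ] using specialised
end

section
/- Let p be a prime and let L be a complete normed field whose norm satisfies the ultrametric inequality and which is a normed ℚ_p-algebra. Let f ∈ ℤ_p[[X]] be a nonzero power series. Write f = p^μ · g where μ ≥ 0 and g ∈ ℤ_p[[X]] has at least one coefficient that is a unit of ℤ_p, and let d be the least index n such that the n-th coefficient of g is a unit. Then the set { x ∈ L : ‖x‖ < 1 and f(x) = 0 } has at most d elements; in particular a nonzero power series in ℤ_p[[X]] has only finitely many zeros in the open unit ball of L. -/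
/-- Evaluation of a power series `f ∈ ℤ_p[[X]]` at a point `x` of a normed `ℚ_p`-algebra `L`
(intended for `‖x‖ < 1`): `f(x) = ∑_{n≥0} (coeff_n f)·x^n`. -/
noncomputable def padicEval (p : ℕ) [Fact p.Prime] (L : Type*) [NormedField L]
    [NormedAlgebra ℚ_[p] L] (f : PowerSeries ℤ_[p]) (x : L) : L :=
  ∑' n : ℕ, algebraMap ℚ_[p] L ((PowerSeries.coeff (R := ℤ_[p]) n f : ℚ_[p])) * x ^ n

/-!
If `r` is a zero of `f = ∑ aₙ Xⁿ` with all `‖aₙ‖ ≤ 1` and `‖r‖ < 1`, then `f = (X - r) · h`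
where `h` has coefficients `bᵢ = ∑ⱼ a_{i+j+1} rʲ`. From `bᵢ = a_{i+1} + r bᵢ₊₁` and the
ultrametric inequality, the `bᵢ` again lie in the unit ball and the first one of norm `1` is
`b_{d-1}`, so induction on `d` bounds the number of zeros; for `d = 0` the constant term
dominates and there is no zero at all. Over `ℤ_p`, dividing by `p^μ` does not move the zeros,
and the units of `ℤ_p` are exactly its elements of norm `1`.
-/

namespace Strassmann

variable {L : Type*} [NormedField L]

structure IsWeierstrassDegree (a : ℕ → L) (d : ℕ) : Prop where
  norm_le_one : ∀ n, ‖a n‖ ≤ 1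
  norm_eq_one : ‖a d‖ = 1
  norm_lt_one : ∀ m < d, ‖a m‖ < 1

/-- The coefficients of `(f(X) - f(r)) / (X - r)`, where `f = ∑ aₙ Xⁿ`. -/
noncomputable def divCoeff (a : ℕ → L) (r : L) (i : ℕ) : L :=
  ∑' j, a (i + j + 1) * r ^ j

variable [IsUltrametricDist L]

lemma norm_add_mul_eq_one {u v r : L} (hu : ‖u‖ = 1) (hv : ‖v‖ ≤ 1) (hr : ‖r‖ < 1) :
    ‖u + r * v‖ = 1 := by
  have hrv : ‖r * v‖ < ‖u‖ := by
    rw [norm_mul, hu]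
    exact (mul_le_of_le_one_right (norm_nonneg r) hv).trans_lt hr
  rw [IsUltrametricDist.norm_add_eq_max_of_norm_ne_norm hrv.ne', max_eq_left hrv.le, hu]

lemma norm_add_mul_lt_one {u v r : L} (hu : ‖u‖ < 1) (hv : ‖v‖ ≤ 1) (hr : ‖r‖ < 1) :
    ‖u + r * v‖ < 1 := by
  refine (IsUltrametricDist.norm_add_le_max u (r * v)).trans_lt (max_lt hu ?_)
  rw [norm_mul]
  exact (mul_le_of_le_one_right (norm_nonneg r) hv).trans_lt hr

variable {a : ℕ → L} {r x : L}

lemma norm_tsum_mul_pow_le_one (ha : ∀ n, ‖a n‖ ≤ 1) (hx : ‖x‖ < 1) :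
    ‖∑' n, a n * x ^ n‖ ≤ 1 := by
  refine IsUltrametricDist.norm_tsum_le_of_forall_le_of_nonneg zero_le_one fun n ↦ ?_
  rw [norm_mul, norm_pow]
  exact mul_le_one₀ (ha n) (by positivity) (pow_le_one₀ (norm_nonneg x) hx.le)

lemma norm_divCoeff_le_one (ha : ∀ n, ‖a n‖ ≤ 1) (hr : ‖r‖ < 1) (i : ℕ) :
    ‖divCoeff a r i‖ ≤ 1 :=
  norm_tsum_mul_pow_le_one (fun _ ↦ ha _) hr

variable [CompleteSpace L]

lemma summable_mul_pow (ha : ∀ n, ‖a n‖ ≤ 1) (hx : ‖x‖ < 1) :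
    Summable fun n ↦ a n * x ^ n := by
  refine NonarchimedeanAddGroup.summable_of_tendsto_cofinite_zero ?_
  rw [Nat.cofinite_eq_atTop]
  refine squeeze_zero_norm (fun n ↦ ?_) (tendsto_pow_atTop_nhds_zero_of_lt_one (norm_nonneg x) hx)
  rw [norm_mul, norm_pow]
  exact mul_le_of_le_one_left (pow_nonneg (norm_nonneg x) n) (ha n)

lemma tsum_mul_pow_eq_add_mul_tsum (ha : ∀ n, ‖a n‖ ≤ 1) (hr : ‖r‖ < 1) :
    ∑' n, a n * r ^ n = a 0 + r * ∑' n, a (n + 1) * r ^ n := by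
  rw [(summable_mul_pow ha hr).tsum_eq_zero_add, ← tsum_mul_left, pow_zero, mul_one]
  exact congrArg _ (tsum_congr fun n ↦ by ring)

lemma divCoeff_eq_add (ha : ∀ n, ‖a n‖ ≤ 1) (hr : ‖r‖ < 1) (i : ℕ) :
    divCoeff a r i = a (i + 1) + r * divCoeff a r (i + 1) := by
  rw [divCoeff, tsum_mul_pow_eq_add_mul_tsum (fun _ ↦ ha _) hr, divCoeff]
  simp only [add_zero, ← add_assoc, add_right_comm i 1]

lemma tsum_mul_pow_eq_add_mul_divCoeff (ha : ∀ n, ‖a n‖ ≤ 1) (hr : ‖r‖ < 1) :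
    ∑' n, a n * r ^ n = a 0 + r * divCoeff a r 0 := by
  simp only [tsum_mul_pow_eq_add_mul_tsum ha hr, divCoeff, zero_add]

/-- Telescoping against `divCoeff a r i = a (i + 1) + r * divCoeff a r (i + 1)`. -/
theorem tsum_mul_pow_sub_tsum_mul_pow (ha : ∀ n, ‖a n‖ ≤ 1) (hr : ‖r‖ < 1) (hx : ‖x‖ < 1) :
    ∑' n, a n * x ^ n - ∑' n, a n * r ^ n = (x - r) * ∑' i, divCoeff a r i * x ^ i := by
  have hb := summable_mul_pow (norm_divCoeff_le_one ha hr) hx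
  have htail : ∑' i, a (i + 1) * x ^ (i + 1)
      = ∑' i, x * (divCoeff a r i * x ^ i) - ∑' i, r * (divCoeff a r (i + 1) * x ^ (i + 1)) := by
    rw [← (hb.mul_left x).tsum_sub ((summable_nat_add_iff 1).mpr (hb.mul_left r))]
    exact tsum_congr fun i ↦ by rw [divCoeff_eq_add ha hr i]; ring
  rw [tsum_mul_pow_eq_add_mul_divCoeff ha hr, (summable_mul_pow ha hx).tsum_eq_zero_add, htail,
    sub_mul, ← tsum_mul_left, ← tsum_mul_left, (hb.mul_left r).tsum_eq_zero_add]
  ring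

namespace IsWeierstrassDegree

theorem divCoeff {d : ℕ} (h : IsWeierstrassDegree a (d + 1)) (hr : ‖r‖ < 1) :
    IsWeierstrassDegree (divCoeff a r) d where
  norm_le_one := norm_divCoeff_le_one h.norm_le_one hr
  norm_eq_one := by
    rw [divCoeff_eq_add h.norm_le_one hr]
    exact norm_add_mul_eq_one h.norm_eq_one (norm_divCoeff_le_one h.norm_le_one hr _) hr
  norm_lt_one m hm := by
    rw [divCoeff_eq_add h.norm_le_one hr]
    exact norm_add_mul_lt_one (h.norm_lt_one _ (by omega))
      (norm_divCoeff_le_one h.norm_le_one hr _) hr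

theorem tsum_mul_pow_ne_zero (h : IsWeierstrassDegree a 0) (hx : ‖x‖ < 1) :
    ∑' n, a n * x ^ n ≠ 0 := by
  rw [tsum_mul_pow_eq_add_mul_divCoeff h.norm_le_one hx, ← norm_ne_zero_iff,
    norm_add_mul_eq_one h.norm_eq_one (norm_divCoeff_le_one h.norm_le_one hx 0) hx]
  exact one_ne_zero

theorem encard_zeros_le {d : ℕ} (h : IsWeierstrassDegree a d) :
    {x : L | ‖x‖ < 1 ∧ ∑' n, a n * x ^ n = 0}.encard ≤ d := by
  induction d generalizing a with
  | zero =>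
    simp only [CharP.cast_eq_zero, nonpos_iff_eq_zero, Set.encard_eq_zero,
      Set.eq_empty_iff_forall_notMem]
    exact fun x ⟨hx, hx0⟩ ↦ h.tsum_mul_pow_ne_zero hx hx0
  | succ d ih =>
    set zeros := {x : L | ‖x‖ < 1 ∧ ∑' n, a n * x ^ n = 0}
    obtain hempty | ⟨r, hr, hr0⟩ := zeros.eq_empty_or_nonempty
    · simp [hempty]
    have hsub : zeros ⊆
        insert r {x : L | ‖x‖ < 1 ∧ ∑' n, Strassmann.divCoeff a r n * x ^ n = 0} := by
      rintro x ⟨hx, hx0⟩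
      have hfactor := tsum_mul_pow_sub_tsum_mul_pow h.norm_le_one hr hx
      rw [hx0, hr0, sub_zero, eq_comm, mul_eq_zero, sub_eq_zero] at hfactor
      exact hfactor.imp id (⟨hx, ·⟩)
    calc _ ≤ _ := Set.encard_le_encard hsub
      _ ≤ _ := Set.encard_insert_le _ _
      _ ≤ d + 1 := by gcongr; exact ih (h.divCoeff hr)

end IsWeierstrassDegree

end Strassmann

section Padic

variable {p : ℕ} [Fact p.Prime] {L : Type*} [NormedField L] [NormedAlgebra ℚ_[p] L]

lemma norm_algebraMap_padicInt (z : ℤ_[p]) : ‖algebraMap ℚ_[p] L z‖ = ‖z‖ := by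
  rw [norm_algebraMap', PadicInt.padic_norm_e_of_padicInt]

lemma padicEval_C_mul (c : ℤ_[p]) (g : PowerSeries ℤ_[p]) (x : L) :
    padicEval p L (PowerSeries.C c * g) x = algebraMap ℚ_[p] L c * padicEval p L g x := by
  rw [padicEval, padicEval, ← tsum_mul_left]
  simp only [PowerSeries.coeff_C_mul, PadicInt.coe_mul, map_mul, mul_assoc]

lemma padicEval_C_mul_eq_zero_iff {c : ℤ_[p]} (hc : c ≠ 0) (g : PowerSeries ℤ_[p]) (x : L) :
    padicEval p L (PowerSeries.C c * g) x = 0 ↔ padicEval p L g x = 0 := by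
  simp [padicEval_C_mul, hc]

lemma isWeierstrassDegree_padicCoeff {g : PowerSeries ℤ_[p]} {d : ℕ}
    (hd : IsUnit (PowerSeries.coeff d g)) (hdmin : ∀ m < d, ¬ IsUnit (PowerSeries.coeff m g)) :
    Strassmann.IsWeierstrassDegree
      (fun n ↦ algebraMap ℚ_[p] L (PowerSeries.coeff (R := ℤ_[p]) n g : ℚ_[p])) d where
  norm_le_one _ := (norm_algebraMap_padicInt _).trans_le (PadicInt.norm_le_one _)
  norm_eq_one := (norm_algebraMap_padicInt _).trans (PadicInt.isUnit_iff.mp hd)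
  norm_lt_one m hm :=
    (norm_algebraMap_padicInt _).trans_lt (PadicInt.not_isUnit_iff.mp (hdmin m hm))

end Padic

theorem stmt_5_general (p : ℕ) [Fact p.Prime] (L : Type*) [NormedField L] [CompleteSpace L]
    [NormedAlgebra ℚ_[p] L]
    (h_ultra : ∀ x y : L, ‖x + y‖ ≤ max ‖x‖ ‖y‖)
    (f g : PowerSeries ℤ_[p]) (μ : ℕ)
    (hfg : f = PowerSeries.C (R := ℤ_[p]) ((p : ℤ_[p]) ^ μ) * g)
    (d : ℕ) (hd : IsUnit (PowerSeries.coeff (R := ℤ_[p]) d g))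
    (hdmin : ∀ m < d, ¬ IsUnit (PowerSeries.coeff (R := ℤ_[p]) m g)) :
    {x : L | ‖x‖ < 1 ∧ padicEval p L f x = 0}.Finite ∧
      {x : L | ‖x‖ < 1 ∧ padicEval p L f x = 0}.ncard ≤ d := by
  have : IsUltrametricDist L :=
    IsUltrametricDist.isUltrametricDist_of_forall_norm_add_le_max_norm h_ultra
  have hpμ : (p : ℤ_[p]) ^ μ ≠ 0 :=
    pow_ne_zero μ (Nat.cast_ne_zero.mpr (Fact.out : p.Prime).ne_zero)
  have hbound : {x : L | ‖x‖ < 1 ∧ padicEval p L f x = 0}.encard ≤ d := by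
    simp only [hfg, padicEval_C_mul_eq_zero_iff hpμ]
    exact (isWeierstrassDegree_padicCoeff (L := L) hd hdmin).encard_zeros_le
  exact ⟨Set.finite_of_encard_le_coe hbound,
    by exact_mod_cast (Set.ncard_le_encard _).trans hbound⟩

/-- A nonzero power series `f = p^μ·g ∈ ℤ_p[[X]]`, where `g` has Weierstrass degree `d`
(least index of a unit coefficient), has at most `d` zeros in the open unit ball of a
complete ultrametric normed `ℚ_p`-algebra field `L`; in particular finitely many. -/
theorem stmt_5 (p : ℕ) [Fact p.Prime] (L : Type*) [NormedField L] [CompleteSpace L]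
    [NormedAlgebra ℚ_[p] L]
    (h_ultra : ∀ x y : L, ‖x + y‖ ≤ max ‖x‖ ‖y‖)
    (f g : PowerSeries ℤ_[p]) (hf : f ≠ 0) (μ : ℕ)
    (hfg : f = PowerSeries.C (R := ℤ_[p]) ((p : ℤ_[p]) ^ μ) * g)
    (d : ℕ) (hd : IsUnit (PowerSeries.coeff (R := ℤ_[p]) d g))
    (hdmin : ∀ m < d, ¬ IsUnit (PowerSeries.coeff (R := ℤ_[p]) m g)) :
    {x : L | ‖x‖ < 1 ∧ padicEval p L f x = 0}.Finite ∧
      {x : L | ‖x‖ < 1 ∧ padicEval p L f x = 0}.ncard ≤ d :=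
  stmt_5_general p L h_ultra f g μ hfg d hd hdmin
end

section
/- Let R be a commutative Noetherian local ring with maximal ideal m_R which is m_R-adically complete. Let P, Q ∈ R[X] be distinguished polynomials, i.e. monic polynomials all of whose coefficients of degree strictly less than the degree lie in m_R. If P and Q generate the same ideal of the power series ring R[[X]], then P = Q. -/
/-!
If `(P) = (Q)` in `R⟦X⟧`, then `P = Q u` and `Q = P v`; reducing mod `m_R`, the image of `P` is
nonzero (it is monic) in the domain `k⟦X⟧`, so `v u ≡ 1` and `u` is a unit. Thus `P = P · 1` and
`P = Q · u` are two Weierstrass factorizations of `P`, and their uniqueness over a local ring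
that is Hausdorff for `m_R` gives `P = Q`.
-/

open IsLocalRing PowerSeries

theorem PowerSeries.exists_isUnit_eq_mul_of_span_singleton_eq {R : Type*} [CommRing R]
    [IsLocalRing R] {f g : R⟦X⟧} (hf : f.map (residue R) ≠ 0)
    (h : Ideal.span {f} = Ideal.span {g}) : ∃ u, IsUnit u ∧ f = g * u := by
  obtain ⟨u, hu⟩ : g ∣ f := Ideal.mem_span_singleton.mp (h ▸ Ideal.mem_span_singleton_self f)
  obtain ⟨v, hv⟩ : f ∣ g := Ideal.mem_span_singleton.mp (h ▸ Ideal.mem_span_singleton_self g)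
  have hvu : v.map (residue R) * u.map (residue R) = 1 := by
    refine mul_left_cancel₀ hf ?_
    rw [mul_one, ← map_mul, ← map_mul, ← mul_assoc, ← hv, ← hu]
  exact ⟨u, (isUnit_map_iff (map (residue R)) u).mp (.of_mul_eq_one_right _ hvu), hu⟩

theorem stmt_9_general (R : Type*) [CommRing R] [IsLocalRing R]
    [IsAdicComplete (maximalIdeal R) R]
    (P Q : Polynomial R)
    (hPmonic : P.Monic) (hPdist : ∀ i < P.natDegree, P.coeff i ∈ maximalIdeal R)
    (hQmonic : Q.Monic) (hQdist : ∀ i < Q.natDegree, Q.coeff i ∈ maximalIdeal R)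
    (h : Ideal.span {(P : PowerSeries R)} = Ideal.span {(Q : PowerSeries R)}) :
    P = Q := by
  have hP : (P : R⟦X⟧).IsWeierstrassFactorization P 1 :=
    ⟨⟨⟨hPdist _⟩, hPmonic⟩, isUnit_one, (mul_one _).symm⟩
  obtain ⟨u, hu, hPQ⟩ := exists_isUnit_eq_mul_of_span_singleton_eq hP.map_ne_zero h
  exact (hP.elim ⟨⟨⟨hQdist _⟩, hQmonic⟩, hu, hPQ⟩).1

/-- Uniqueness of distinguished polynomials generating a given ideal of `R[[X]]` for `R` a
complete Noetherian local ring: if `P` and `Q` are distinguished polynomials (monic with all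
lower coefficients in the maximal ideal) generating the same ideal of `R[[X]]`, then `P = Q`. -/
theorem stmt_9 (R : Type*) [CommRing R] [IsNoetherianRing R] [IsLocalRing R]
    [IsAdicComplete (maximalIdeal R) R]
    (P Q : Polynomial R)
    (hPmonic : P.Monic) (hPdist : ∀ i < P.natDegree, P.coeff i ∈ maximalIdeal R)
    (hQmonic : Q.Monic) (hQdist : ∀ i < Q.natDegree, Q.coeff i ∈ maximalIdeal R)
    (h : Ideal.span {(P : PowerSeries R)} = Ideal.span {(Q : PowerSeries R)}) :
    P = Q :=
  stmt_9_general R P Q hPmonic hPdist hQmonic hQdist h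
end

section
/- Let N ≥ 1 and k be integers, and let f be a cusp form of weight k for the congruence subgroup Γ₀(N), with q-expansion f(z) = ∑_{n≥1} a_n e^{2πinz} for z in the upper half-plane. Let j ≥ 0 be an integer such that ∑_{n≥1} |a_n|·n^{−(j+1)} < ∞. Then the function y ↦ f(iy)·y^j is integrable on (0,∞) and ∫_0^∞ f(iy)·y^j dy = (j! / (2π)^{j+1}) · ∑_{n≥1} a_n·n^{−(j+1)}; that is, the period integral ∫_0^∞ f(iy) y^j dy equals j!/(2π)^{j+1} times the value L(f, j+1) of the L-series of f. -/
/-!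
On the imaginary axis the q-expansion reads `f(iy) y^j = ∑ a_n y^j e^{-2πny}`. Each term is a
Gamma integral, `∫_0^∞ y^j e^{-2πny} dy = j!/(2πn)^{j+1}`, and the integrals of the absolute
values of the terms sum to `j!/(2π)^{j+1} ∑ |a_n| n^{-(j+1)} < ∞`, so the sum and the integral
may be interchanged.
-/

open Complex MeasureTheory CongruenceSubgroup Set
open scoped Nat

namespace MeasureTheory

variable {α E ι : Type*} [MeasurableSpace α] {μ : Measure α} [NormedAddCommGroup E] [Countable ι]

theorem integrable_of_ae_eq_tsum_of_summable_integral_norm {F : ι → α → E} {f : α → E}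
    (hf : AEStronglyMeasurable f μ) (hF_int : ∀ i, Integrable (F i) μ)
    (hF_sum : Summable fun i ↦ ∫ a, ‖F i a‖ ∂μ) (h : ∀ᵐ a ∂μ, f a = ∑' i, F i a) :
    Integrable f μ := by
  refine ⟨hf, ?_⟩
  have h_lintegral : ∀ i, ∫⁻ a, ‖F i a‖ₑ ∂μ = ENNReal.ofReal (∫ a, ‖F i a‖ ∂μ) := fun i ↦
    (ofReal_integral_norm_eq_lintegral_enorm (hF_int i)).symm
  calc ∫⁻ a, ‖f a‖ₑ ∂μ
      ≤ ∫⁻ a, ∑' i, ‖F i a‖ₑ ∂μ :=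
        lintegral_mono_ae (h.mono fun a ha ↦ ha ▸ enorm_tsum_le_tsum_enorm)
    _ = ENNReal.ofReal (∑' i, ∫ a, ‖F i a‖ ∂μ) := by
        rw [lintegral_tsum fun i ↦ (hF_int i).1.enorm, tsum_congr h_lintegral,
          ENNReal.ofReal_tsum_of_nonneg (fun i ↦ integral_nonneg fun a ↦ norm_nonneg _) hF_sum]
    _ < ⊤ := ENNReal.ofReal_lt_top

end MeasureTheory

open Real

theorem integral_Ioi_pow_mul_exp_neg_mul (j : ℕ) {r : ℝ} (hr : 0 < r) :
    ∫ y in Ioi 0, y ^ j * rexp (-(r * y)) = j ! / r ^ (j + 1) := by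
  have h := integral_rpow_mul_exp_neg_mul_Ioi (a := j + 1) (by positivity) hr
  rw [add_sub_cancel_right, Real.Gamma_nat_eq_factorial, one_div, inv_rpow hr.le] at h
  simp_rw [rpow_natCast] at h
  rw [h, ← Nat.cast_succ, rpow_natCast, div_eq_inv_mul]

theorem integrableOn_Ioi_pow_mul_exp_neg_mul (j : ℕ) {r : ℝ} (hr : 0 < r) :
    IntegrableOn (fun y ↦ y ^ j * rexp (-(r * y))) (Ioi 0) := by
  simpa [rpow_natCast, neg_mul] using integrableOn_rpow_mul_exp_neg_mul_rpow (s := j) (p := 1)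
    (by linarith [j.cast_nonneg (α := ℝ)]) one_pos hr

section ExpTerm

variable {c : ℂ} {r : ℝ}

theorem integrableOn_Ioi_mul_pow_mul_exp_neg_mul (hc : c = 0 ∨ 0 < r) (j : ℕ) :
    IntegrableOn (fun y : ℝ ↦ c * ↑(y ^ j * rexp (-(r * y)))) (Ioi 0) := by
  rcases hc with rfl | hr
  · simp
  · exact (integrableOn_Ioi_pow_mul_exp_neg_mul j hr).ofReal.const_mul c

theorem integral_Ioi_mul_pow_mul_exp_neg_mul (hc : c = 0 ∨ 0 < r) (j : ℕ) :
    ∫ y in Ioi 0, c * ↑(y ^ j * rexp (-(r * y))) = j ! * (c / (r : ℂ) ^ (j + 1)) := by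
  rcases hc with rfl | hr
  · simp
  · rw [integral_const_mul, integral_complex_ofReal, integral_Ioi_pow_mul_exp_neg_mul j hr]
    push_cast
    ring

theorem integral_Ioi_norm_mul_pow_mul_exp_neg_mul (hc : c = 0 ∨ 0 < r) (j : ℕ) :
    ∫ y in Ioi 0, ‖c * ↑(y ^ j * rexp (-(r * y)))‖ = j ! * (‖c‖ / r ^ (j + 1)) := by
  rcases hc with rfl | hr
  · simp
  · have h_norm : ∀ y ∈ Ioi (0 : ℝ), ‖c * ↑(y ^ j * rexp (-(r * y)))‖ =
        ‖c‖ * (y ^ j * rexp (-(r * y))) := fun y hy ↦ by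
      rw [norm_mul, norm_real, norm_of_nonneg (by have := hy.out; positivity)]
    rw [setIntegral_congr_fun measurableSet_Ioi h_norm, integral_const_mul,
      integral_Ioi_pow_mul_exp_neg_mul j hr]
    ring

end ExpTerm

theorem integrableOn_Ioi_and_integral_of_eq_tsum_pow_mul_exp {ι : Type*} [Countable ι]
    {a : ι → ℂ} {p : ι → ℝ} {G : ℝ → ℂ} {j : ℕ} (hp : ∀ i, a i = 0 ∨ 0 < p i)
    (h_sum : Summable fun i ↦ ‖a i‖ / p i ^ (j + 1)) (hG : ContinuousOn G (Ioi 0))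
    (hG_eq : ∀ y ∈ Ioi 0, G y = ∑' i, a i * ↑(y ^ j * rexp (-(p i * y)))) :
    IntegrableOn G (Ioi 0) ∧ ∫ y in Ioi 0, G y = j ! * ∑' i, a i / (p i : ℂ) ^ (j + 1) := by
  have h_int i := integrableOn_Ioi_mul_pow_mul_exp_neg_mul (hp i) j
  have h_norm_sum : Summable fun i ↦ ∫ y in Ioi 0, ‖a i * ↑(y ^ j * rexp (-(p i * y)))‖ := by
    simpa only [integral_Ioi_norm_mul_pow_mul_exp_neg_mul (hp _)] using h_sum.mul_left (j ! : ℝ)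
  refine ⟨integrable_of_ae_eq_tsum_of_summable_integral_norm
    (hG.aestronglyMeasurable measurableSet_Ioi) h_int h_norm_sum
    ((ae_restrict_iff' measurableSet_Ioi).2 (.of_forall hG_eq)), ?_⟩
  rw [setIntegral_congr_fun measurableSet_Ioi hG_eq,
    ← integral_tsum_of_summable_integral_norm h_int h_norm_sum, ← tsum_mul_left]
  exact tsum_congr fun i ↦ integral_Ioi_mul_pow_mul_exp_neg_mul (hp i) j

theorem continuousOn_Ioi_dite_I_mul {g : UpperHalfPlane → ℂ} (hg : Continuous g) (j : ℕ) :
    ContinuousOn (fun y : ℝ ↦ if hy : 0 < y then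
      g (⟨Complex.I * (y : ℂ), by simpa using hy⟩ : UpperHalfPlane) * (y : ℂ) ^ j else 0)
      (Ioi 0) := by
  rw [continuousOn_iff_continuous_domRestrict]
  have h_restrict : (Ioi (0 : ℝ)).domRestrict (fun y : ℝ ↦ if hy : 0 < y then
      g (⟨Complex.I * (y : ℂ), by simpa using hy⟩ : UpperHalfPlane) * (y : ℂ) ^ j else 0) =
      fun y : Ioi (0 : ℝ) ↦ g ⟨I * (y : ℝ), by simpa using y.2.out⟩ * ((y : ℝ) : ℂ) ^ j := by
    funext y
    exact dif_pos y.2.out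
  rw [h_restrict]
  exact (hg.comp (Continuous.upperHalfPlaneMk (by fun_prop) _)).mul (by fun_prop)

/-- The period integral of a cusp form `f` of weight `k` for `Γ₀(N)` with q-expansion
`f(z) = ∑_{n≥1} a_n e^{2πinz}`: for `j ≥ 0` with `∑_{n≥1} |a_n| n^{-(j+1)} < ∞`, the
function `y ↦ f(iy)·y^j` is integrable on `(0,∞)` and
`∫_0^∞ f(iy) y^j dy = (j!/(2π)^{j+1}) · L(f, j+1)`. -/
theorem stmt_12 (N : ℕ) (k : ℤ) (f : CuspForm (Gamma0 N) k)
    (a : ℕ → ℂ) (ha0 : a 0 = 0)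
    (hqexp : ∀ z : UpperHalfPlane,
      f z = ∑' n : ℕ, a n * Complex.exp (2 * Real.pi * I * (n : ℂ) * (z : ℂ)))
    (j : ℕ) (hsum : Summable (fun n : ℕ => ‖a n‖ / (n : ℝ) ^ (j + 1))) :
    IntegrableOn (fun y : ℝ =>
        if hy : 0 < y then f (⟨Complex.I * (y : ℂ), by simpa using hy⟩ : UpperHalfPlane) *
          (y : ℂ) ^ j else 0) (Set.Ioi 0) ∧
    (∫ y in Set.Ioi (0 : ℝ),
        if hy : 0 < y then f (⟨Complex.I * (y : ℂ), by simpa using hy⟩ : UpperHalfPlane) *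
          (y : ℂ) ^ j else 0) =
      ((j.factorial : ℂ) / (2 * Real.pi) ^ (j + 1)) * ∑' n : ℕ, a n / (n : ℂ) ^ (j + 1) := by
  have hp (n : ℕ) : a n = 0 ∨ 0 < 2 * π * n := by
    rcases n.eq_zero_or_pos with rfl | hn
    · exact .inl ha0
    · exact .inr (by positivity)
  have h_sum : Summable fun n : ℕ ↦ ‖a n‖ / (2 * π * n) ^ (j + 1) := by
    refine (hsum.div_const ((2 * π) ^ (j + 1))).congr fun n ↦ ?_
    rw [div_div, ← mul_pow, mul_comm (n : ℝ)]
  have h_eq (y : ℝ) (hy : y ∈ Ioi 0) : (if hy : 0 < y then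
      f (⟨Complex.I * (y : ℂ), by simpa using hy⟩ : UpperHalfPlane) * (y : ℂ) ^ j else 0) =
      ∑' n : ℕ, a n * ↑(y ^ j * rexp (-(2 * π * n * y))) := by
    rw [dif_pos hy.out, hqexp, ← tsum_mul_right]
    refine tsum_congr fun n ↦ ?_
    have h_exponent : 2 * π * I * n * (I * y) = ↑(-(2 * π * n * y)) := by
      push_cast
      linear_combination (2 * π * n * y : ℂ) * I_sq
    rw [UpperHalfPlane.coe_mk, h_exponent, ofReal_mul, ofReal_exp, ofReal_pow]
    ring
  obtain ⟨h_int, h_integral⟩ := integrableOn_Ioi_and_integral_of_eq_tsum_pow_mul_exp hp h_sum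
    (continuousOn_Ioi_dite_I_mul f.holo'.continuous j) h_eq
  have h_term (n : ℕ) : a n / ((2 * π * n : ℝ) : ℂ) ^ (j + 1) =
      a n / (n : ℂ) ^ (j + 1) / (2 * π) ^ (j + 1) := by
    push_cast
    rw [mul_pow, div_div, mul_comm ((n : ℂ) ^ (j + 1))]
  refine ⟨h_int, h_integral.trans ?_⟩
  rw [tsum_congr h_term, tsum_div_const]
  ring
end
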